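/- (Alternative one-step dqRK contraction.) Let β < q₀ < q < 1 − β with q − q₀ > β and q₀m, qm, βm integers. Suppose A x* = b_t, b = b_t + ξ with ‖ξ‖₀ ≤ βm, and x_k ∈ ℝⁿ satisfies ⟨x_k, a_j⟩ = b_j for some j. Let B be a set of exactly (q − q₀)m indices with Q₀ ≤ |r_j| ≤ Q for all j ∈ B (obtained by removing from the qm indices at or below the q-quantile a set of q₀m indices at or below the q₀-quantile). Then (1/((q−q₀)m)) Σ_{i∈B} ‖(x_k + r_i a_i) − x*‖² ≤ (1 − C)·‖x_k − x*‖², where C := (q − q₀ − β)·(σ_{q−β,min}(A)²/((q−q₀)q m) + σ_{q₀−β,min}(A)²/((q−q₀)q₀ q m²)) − (β/(q−q₀))·(1 + 2σ_max(A)²/(m(1 − q − β))). Moreover, if (q/(q−q₀−β))·(βm/σ_max(A)² + 2β/(1 − q − β)) < (σ_{q−β,min}(A)² + σ_{q₀−β,min}(A)²/(q₀m))/σ_max(A)², then C > 0. -/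

import Mathlib

open Finset

/-- Largest singular value of `A`, as the operator norm of the associated
Euclidean linear map. -/
noncomputable def sigmaMax {m n : ℕ} (A : Matrix (Fin m) (Fin n) ℝ) : ℝ :=
  ‖LinearMap.toContinuousLinearMap (Matrix.toEuclideanLin A)‖

/-- `sigmaSMin A k` is the minimum over all index sets `I` of cardinality `k`
of the smallest value of `‖A_I x‖` over unit vectors `x`. -/
noncomputable def sigmaSMin {m n : ℕ} (A : Matrix (Fin m) (Fin n) ℝ) (k : ℕ) : ℝ :=
  sInf {t : ℝ | ∃ I : Finset (Fin m), I.card = k ∧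
    t = sInf {u : ℝ | ∃ x : EuclideanSpace ℝ (Fin n), ‖x‖ = 1 ∧
      u = Real.sqrt (∑ i ∈ I, (A.mulVec (fun k => x k) i) ^ 2)}}

/-- The `j`-th row of `A`, as a vector in Euclidean space. -/
noncomputable def row {m n : ℕ} (A : Matrix (Fin m) (Fin n) ℝ) (j : Fin m) :
    EuclideanSpace ℝ (Fin n) := WithLp.toLp 2 (fun k => A j k)

/-- Residual `r_j = b_j - ⟨x, a_j⟩`. -/
noncomputable def resid {m n : ℕ} (A : Matrix (Fin m) (Fin n) ℝ) (b : Fin m → ℝ)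
    (x : EuclideanSpace ℝ (Fin n)) (j : Fin m) : ℝ :=
  b j - ∑ k, x k * A j k

/-- `IsQuantile f k Q` says `Q` is the `k`-th smallest value (1-indexed,
counted with multiplicity) of the multiset `{f j}`. -/
def IsQuantile {m : ℕ} (f : Fin m → ℝ) (k : ℕ) (Q : ℝ) : Prop :=
  k ≤ (Finset.univ.filter fun j => f j ≤ Q).card ∧
  (Finset.univ.filter fun j => f j < Q).card < k

/-!
Write `d = x_k - x*` and `e_j = ⟪d, a_j⟫`, so that `r_j = ξ_j - e_j` and a step along row `i`
gives `‖x_k + r_i a_i - x*‖² = ‖d‖² + ξ_i² - e_i²`; the claim is that the average of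
`e_i² - ξ_i²` over `B` is at least `C ‖d‖²`. Off the support `S` of `ξ` we have `|e_j| = |r_j|`,
so the quantile conditions become bounds on `e_j²`: at least `#B - kβ` rows of `B` have
`e_j² ≥ Q₀²`, the clean rows of `B₀` have `e_j² ≤ Q₀²`, and at least `m - kq - kβ` clean rows have
`e_j² ≥ Q²`, whence `(m - kq - kβ) Q² ≤ σ_max² ‖d‖²`. The restricted singular values bound
`σ² ‖d‖²` by the sum of `e_j²` over the clean rows of `Bq` and of `B₀`, which together with the
bounds in `Q₀` gives the gain on `B \ S`; each of the at most `kβ` corrupted rows of `B` loses at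
most `2 Q² + ‖d‖²`.
-/

open scoped RealInnerProductSpace

section LinearAlgebra

variable {m n : ℕ} (A : Matrix (Fin m) (Fin n) ℝ)

theorem inner_row (x : EuclideanSpace ℝ (Fin n)) (j : Fin m) :
    ⟪x, row A j⟫ = ∑ k, x k * A j k := by
  simp [row, PiLp.inner_apply, mul_comm]

theorem mulVec_apply_eq_inner_row (x : EuclideanSpace ℝ (Fin n)) (j : Fin m) :
    A.mulVec (fun k => x k) j = ⟪x, row A j⟫ := by
  simp [inner_row, Matrix.mulVec, dotProduct, mul_comm]

theorem norm_row {j : Fin m} (hj : ∑ k, A j k ^ 2 = 1) : ‖row A j‖ = 1 := by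
  simp [EuclideanSpace.norm_eq, row, hj]

theorem resid_eq_sub_inner {b bt ξ : Fin m → ℝ} {xstar : EuclideanSpace ℝ (Fin n)}
    (hsol : A.mulVec (fun k => xstar k) = bt) (hb : b = bt + ξ) (x : EuclideanSpace ℝ (Fin n)) :
    resid A b x = ξ - fun j => ⟪x - xstar, row A j⟫ := by
  ext j
  rw [resid, hb, ← hsol, Pi.sub_apply, Pi.add_apply, mulVec_apply_eq_inner_row, ← inner_row,
    inner_sub_left]
  ring

theorem sigmaSMin_nonneg (k : ℕ) : 0 ≤ sigmaSMin A k :=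
  Real.sInf_nonneg <| by
    rintro t ⟨I, -, rfl⟩
    exact Real.sInf_nonneg <| by rintro u ⟨x, -, rfl⟩; exact Real.sqrt_nonneg _

theorem sigmaSMin_le_sqrt {k : ℕ} {J : Finset (Fin m)} (hJ : #J = k)
    {x : EuclideanSpace ℝ (Fin n)} (hx : ‖x‖ = 1) :
    sigmaSMin A k ≤ √(∑ i ∈ J, ⟪x, row A i⟫ ^ 2) := by
  unfold sigmaSMin
  refine le_trans (csInf_le ⟨0, ?_⟩ ⟨J, hJ, rfl⟩) (csInf_le ⟨0, ?_⟩ ⟨x, hx, ?_⟩)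
  · rintro t ⟨I, -, rfl⟩
    exact Real.sInf_nonneg <| by rintro u ⟨y, -, rfl⟩; exact Real.sqrt_nonneg _
  · rintro u ⟨y, -, rfl⟩
    exact Real.sqrt_nonneg _
  · simp only [mulVec_apply_eq_inner_row]

theorem sigmaSMin_sq_mul_le_sum {k : ℕ} {I : Finset (Fin m)} (hI : k ≤ #I)
    (d : EuclideanSpace ℝ (Fin n)) :
    sigmaSMin A k ^ 2 * ‖d‖ ^ 2 ≤ ∑ i ∈ I, ⟪d, row A i⟫ ^ 2 := by
  rcases eq_or_ne d 0 with rfl | hd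
  · simp
  obtain ⟨J, hJI, hJ⟩ := exists_subset_card_eq hI
  have hd' : 0 < ‖d‖ ^ 2 := by positivity
  have hx : ‖‖d‖⁻¹ • d‖ = 1 := by simp [norm_smul, hd]
  have hσ := pow_le_pow_left₀ (sigmaSMin_nonneg A k) (sigmaSMin_le_sqrt A hJ hx) 2
  simp only [inner_smul_left, mul_pow, ← mul_sum, conj_trivial, inv_pow] at hσ
  rw [Real.sq_sqrt (by positivity)] at hσ
  calc sigmaSMin A k ^ 2 * ‖d‖ ^ 2 ≤ ∑ i ∈ J, ⟪d, row A i⟫ ^ 2 := by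
        rwa [le_inv_mul_iff₀ hd', mul_comm] at hσ
    _ ≤ ∑ i ∈ I, ⟪d, row A i⟫ ^ 2 :=
        sum_le_sum_of_subset_of_nonneg hJI fun _ _ _ => sq_nonneg _

theorem sum_inner_row_sq_le (I : Finset (Fin m)) (d : EuclideanSpace ℝ (Fin n)) :
    ∑ i ∈ I, ⟪d, row A i⟫ ^ 2 ≤ sigmaMax A ^ 2 * ‖d‖ ^ 2 := by
  have hnorm : ‖Matrix.toEuclideanLin A d‖ ^ 2 = ∑ i, ⟪d, row A i⟫ ^ 2 := by
    simp [EuclideanSpace.norm_sq_eq, Matrix.toLpLin_apply, ← mulVec_apply_eq_inner_row]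
  calc ∑ i ∈ I, ⟪d, row A i⟫ ^ 2 ≤ ∑ i, ⟪d, row A i⟫ ^ 2 :=
        sum_le_sum_of_subset_of_nonneg (subset_univ I) fun _ _ _ => sq_nonneg _
    _ ≤ (sigmaMax A * ‖d‖) ^ 2 := by
        rw [← hnorm]
        exact pow_le_pow_left₀ (norm_nonneg _)
          ((Matrix.toEuclideanLin A).toContinuousLinearMap.le_opNorm d) 2
    _ = sigmaMax A ^ 2 * ‖d‖ ^ 2 := mul_pow _ _ _

theorem inner_row_sq_le_norm_sq {j : Fin m} (hj : ∑ k, A j k ^ 2 = 1)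
    (d : EuclideanSpace ℝ (Fin n)) : ⟪d, row A j⟫ ^ 2 ≤ ‖d‖ ^ 2 := by
  refine sq_le_sq.mpr <| (abs_real_inner_le_norm d (row A j)).trans ?_
  rw [norm_row A hj, mul_one]
  exact le_abs_self _

theorem sigmaMax_pos (hA : A ≠ 0) : 0 < sigmaMax A := by
  refine norm_pos_iff.mpr fun h => hA ?_
  exact Matrix.toEuclideanLin.injective (LinearMap.toContinuousLinearMap.injective
    (h.trans (map_zero _).symm) |>.trans (map_zero _).symm)

end LinearAlgebra

theorem norm_add_smul_sub_sq {E : Type*} [NormedAddCommGroup E] [InnerProductSpace ℝ E]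
    {a : E} (ha : ‖a‖ = 1) (x y : E) (t : ℝ) :
    ‖x + (t - ⟪x - y, a⟫) • a - y‖ ^ 2 = ‖x - y‖ ^ 2 + t ^ 2 - ⟪x - y, a⟫ ^ 2 := by
  rw [add_sub_right_comm, norm_add_sq_real, inner_smul_right, norm_smul, ha, Real.norm_eq_abs,
    mul_one, sq_abs]
  ring

section SumsOfSquares

variable {α : Type*} {f : α → ℝ} {T : Finset α} {c : ℝ}

theorem card_mul_sq_le_sum_sq (hc : 0 ≤ c) (h : ∀ i ∈ T, c ≤ |f i|) :
    #T * c ^ 2 ≤ ∑ i ∈ T, f i ^ 2 := by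
  simpa using card_nsmul_le_sum T (f · ^ 2) (c ^ 2) fun i hi =>
    sq_le_sq.mpr (by rw [abs_of_nonneg hc]; exact h i hi)

theorem sum_sq_le_card_mul_sq (h : ∀ i ∈ T, |f i| ≤ c) : ∑ i ∈ T, f i ^ 2 ≤ #T * c ^ 2 := by
  simpa using sum_le_card_nsmul T (f · ^ 2) (c ^ 2) fun i hi =>
    sq_le_sq.mpr ((h i hi).trans (le_abs_self c))

end SumsOfSquares

section Corruption

variable {ι : Type*} [DecidableEq ι] {e ξ : ι → ℝ} {S : Finset ι} {kβ : ℕ}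

theorem abs_sub_apply_of_mem_sdiff (hξ : ∀ j ∉ S, ξ j = 0) {T : Finset ι} {i : ι}
    (hi : i ∈ T \ S) : |(ξ - e) i| = |e i| := by
  simp [hξ i (mem_sdiff.mp hi).2]

theorem card_sub_le_card_sdiff (hS : #S ≤ kβ) (T : Finset ι) : (#T : ℝ) - kβ ≤ #(T \ S) := by
  have : #T ≤ #(T \ S) + kβ := by have := le_card_sdiff S T; omega
  rw [sub_le_iff_le_add]
  exact_mod_cast this

theorem card_sub_mul_sq_le_sum_sdiff (hξ : ∀ j ∉ S, ξ j = 0) (hS : #S ≤ kβ) {B : Finset ι}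
    {Q₀ : ℝ} (hQ₀ : 0 ≤ Q₀) (hB : ∀ i ∈ B, Q₀ ≤ |(ξ - e) i|) :
    (#B - kβ) * Q₀ ^ 2 ≤ ∑ i ∈ B \ S, e i ^ 2 :=
  (mul_le_mul_of_nonneg_right (card_sub_le_card_sdiff hS B) (sq_nonneg Q₀)).trans <|
    card_mul_sq_le_sum_sq hQ₀ fun i hi =>
      abs_sub_apply_of_mem_sdiff hξ hi ▸ hB i (mem_sdiff.mp hi).1

theorem sum_sdiff_le_card_mul_sq (hξ : ∀ j ∉ S, ξ j = 0) {B₀ : Finset ι} {Q₀ : ℝ}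
    (hB₀ : ∀ i ∈ B₀, |(ξ - e) i| ≤ Q₀) : ∑ i ∈ B₀ \ S, e i ^ 2 ≤ #B₀ * Q₀ ^ 2 := by
  refine (sum_sq_le_card_mul_sq (c := Q₀) fun i hi => ?_).trans ?_
  · exact abs_sub_apply_of_mem_sdiff hξ hi ▸ hB₀ i (mem_sdiff.mp hi).1
  · gcongr
    exact sdiff_subset

theorem sum_sdiff_sub_le_sum_sq_sub_sum_sq (hξ : ∀ j ∉ S, ξ j = 0) (hS : #S ≤ kβ) {B : Finset ι}
    {Q D : ℝ} (hB : ∀ i ∈ B, |(ξ - e) i| ≤ Q) (hD : ∀ i, e i ^ 2 ≤ D) (hD0 : 0 ≤ D) :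
    ∑ i ∈ B \ S, e i ^ 2 - kβ * (2 * Q ^ 2 + D) ≤ ∑ i ∈ B, e i ^ 2 - ∑ i ∈ B, ξ i ^ 2 := by
  have hcorrupt : ∀ i ∈ B ∩ S, ξ i ^ 2 - e i ^ 2 ≤ 2 * Q ^ 2 + D := fun i hi => by
    have hr : (ξ i - e i) ^ 2 ≤ Q ^ 2 :=
      sq_le_sq.mpr ((hB i (mem_inter.mp hi).1).trans (le_abs_self Q))
    nlinarith [hD i, sq_nonneg (ξ i - 2 * e i)]
  have hcard : (#(B ∩ S) : ℝ) ≤ kβ := by exact_mod_cast (card_le_card inter_subset_right).trans hS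
  have hclean : ∑ i ∈ B \ S, ξ i ^ 2 = 0 :=
    sum_eq_zero fun i hi => by simp [hξ i (mem_sdiff.mp hi).2]
  rw [← sum_inter_add_sum_sdiff B S (e · ^ 2), ← sum_inter_add_sum_sdiff B S (ξ · ^ 2), hclean]
  have := (sum_le_card_nsmul _ _ _ hcorrupt).trans
    (by rw [nsmul_eq_mul]; gcongr : #(B ∩ S) • (2 * Q ^ 2 + D) ≤ kβ * (2 * Q ^ 2 + D))
  rw [sum_sub_distrib] at this
  linarith

theorem card_sub_mul_sq_le [Fintype ι] (hξ : ∀ j ∉ S, ξ j = 0) (hS : #S ≤ kβ) {kq : ℕ}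
    {Q sM : ℝ} (hQ : #{j | |(ξ - e) j| < Q} < kq) (hQ0 : 0 ≤ Q)
    (hsM : ∀ T : Finset ι, ∑ i ∈ T, e i ^ 2 ≤ sM) :
    (Fintype.card ι - kq - kβ) * Q ^ 2 ≤ sM := by
  set G : Finset ι := {j | ¬ |(ξ - e) j| < Q}
  have hG : (Fintype.card ι : ℝ) - kq ≤ #G := by
    have := card_filter_add_card_filter_not (s := univ) fun j => |(ξ - e) j| < Q
    change #{j | |(ξ - e) j| < Q} + #G = #univ at this
    rw [card_univ] at this
    have : Fintype.card ι ≤ kq + #G := by omega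
    rw [sub_le_iff_le_add']
    exact_mod_cast this
  calc (Fintype.card ι - kq - kβ) * Q ^ 2 ≤ #(G \ S) * Q ^ 2 := by
        gcongr
        linarith [card_sub_le_card_sdiff hS G]
    _ ≤ ∑ i ∈ G \ S, e i ^ 2 := card_mul_sq_le_sum_sq hQ0 fun i hi => by
        rw [← abs_sub_apply_of_mem_sdiff hξ hi]
        simpa [G] using (mem_sdiff.mp hi).1
    _ ≤ sM := hsM _

theorem le_sum_sdiff_add_card_mul_sq (hξ : ∀ j ∉ S, ξ j = 0) (hS : #S ≤ kβ)
    {Bq B₀ : Finset ι} (hB₀ : B₀ ⊆ Bq) {s₁ Q₀ : ℝ}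
    (hs₁ : ∀ T : Finset ι, #Bq - kβ ≤ #T → s₁ ≤ ∑ i ∈ T, e i ^ 2)
    (hB₀Q : ∀ i ∈ B₀, |(ξ - e) i| ≤ Q₀) :
    s₁ ≤ ∑ i ∈ (Bq \ B₀) \ S, e i ^ 2 + #B₀ * Q₀ ^ 2 := by
  have hsplit : (Bq \ S) \ (B₀ \ S) = (Bq \ B₀) \ S := by ext; simp; tauto
  calc s₁ ≤ ∑ i ∈ Bq \ S, e i ^ 2 := hs₁ _ (by have := le_card_sdiff S Bq; omega)
    _ = ∑ i ∈ (Bq \ B₀) \ S, e i ^ 2 + ∑ i ∈ B₀ \ S, e i ^ 2 := by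
        rw [← sum_sdiff (sdiff_subset_sdiff hB₀ le_rfl), hsplit]
    _ ≤ _ := by gcongr; exact sum_sdiff_le_card_mul_sq hξ hB₀Q

/-- With an exact row `j₀` available, swapping it into the top-`#Bq` set in place of one row of
`B₀` saves one copy of `Q₀ ^ 2`. -/
theorem add_sq_le_sum_sdiff_add_card_mul_sq {Bq B₀ : Finset ι} (hB₀ : B₀ ⊆ Bq)
    (hne : B₀.Nonempty) {s₁ Q₀ : ℝ} (hs₁ : ∀ T : Finset ι, #Bq ≤ #T → s₁ ≤ ∑ i ∈ T, e i ^ 2)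
    (hBQ₀ : ∀ i ∈ Bq \ B₀, Q₀ ≤ |e i|) (hB₀Q : ∀ i ∈ B₀, |e i| ≤ Q₀) {j₀ : ι} (hj₀ : e j₀ = 0) :
    s₁ + Q₀ ^ 2 ≤ ∑ i ∈ Bq \ B₀, e i ^ 2 + #B₀ * Q₀ ^ 2 := by
  obtain ⟨i₀, hi₀⟩ := hne
  have hQ₀ : 0 ≤ Q₀ := (abs_nonneg _).trans (hB₀Q i₀ hi₀)
  by_cases hj₀B : j₀ ∈ Bq \ B₀
  · have hQ₀0 : Q₀ = 0 := le_antisymm (by simpa [hj₀] using hBQ₀ j₀ hj₀B) hQ₀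
    calc s₁ + Q₀ ^ 2 ≤ ∑ i ∈ Bq, e i ^ 2 + 0 := by rw [hQ₀0]; simpa using hs₁ Bq le_rfl
      _ ≤ _ := by
        rw [← sum_sdiff hB₀, hQ₀0]
        simpa using sum_sq_le_card_mul_sq (c := 0) fun i hi => (hB₀Q i hi).trans hQ₀0.le
  obtain ⟨B₁, hB₁, hB₁card⟩ := exists_subset_card_eq (pred_card_le_card_erase (s := B₀) (a := j₀))
  have hj₀B₁ : j₀ ∉ B₁ := fun h => by simpa using hB₁ h
  have hdisj : Disjoint (Bq \ B₀) (insert j₀ B₁) := by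
    refine disjoint_left.mpr fun i hi hi' => ?_
    rcases mem_insert.mp hi' with rfl | h
    · exact hj₀B hi
    · exact (mem_sdiff.mp hi).2 (mem_of_mem_erase (hB₁ h))
  have hB₀card : #B₁ + 1 = #B₀ := by
    have := card_pos.mpr ⟨i₀, hi₀⟩; omega
  have hT : #Bq ≤ #((Bq \ B₀) ∪ insert j₀ B₁) := by
    rw [card_union_of_disjoint hdisj, card_insert_of_notMem hj₀B₁, card_sdiff_of_subset hB₀]
    have := card_le_card hB₀; omega
  have hB₁Q : ∑ i ∈ B₁, e i ^ 2 ≤ #B₁ * Q₀ ^ 2 :=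
    sum_sq_le_card_mul_sq fun i hi => hB₀Q i (mem_of_mem_erase (hB₁ hi))
  have hB₀R : (#B₀ : ℝ) = #B₁ + 1 := by exact_mod_cast hB₀card.symm
  have := hs₁ _ hT
  rw [sum_union hdisj, sum_insert hj₀B₁, hj₀] at this
  rw [hB₀R]
  linarith

theorem add_sq_le_sum_sdiff_add_card_add_mul_sq (hξ : ∀ j ∉ S, ξ j = 0) (hS : #S ≤ kβ)
    {Bq B₀ : Finset ι} (hB₀ : B₀ ⊆ Bq) (hne : B₀.Nonempty) {s₁ Q₀ : ℝ}
    (hs₁ : ∀ T : Finset ι, #Bq - kβ ≤ #T → s₁ ≤ ∑ i ∈ T, e i ^ 2)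
    (hBQ₀ : ∀ i ∈ Bq \ B₀, Q₀ ≤ |(ξ - e) i|) (hB₀Q : ∀ i ∈ B₀, |(ξ - e) i| ≤ Q₀)
    (hexact : ∃ j, (ξ - e) j = 0) :
    s₁ + Q₀ ^ 2 ≤ ∑ i ∈ (Bq \ B₀) \ S, e i ^ 2 + (#B₀ + kβ) * Q₀ ^ 2 := by
  rcases Nat.eq_zero_or_pos kβ with rfl | hkβ
  -- without corruption the extra `Q₀ ^ 2` has to come from the exact row
  · have hS0 : S = ∅ := card_eq_zero.mp (Nat.le_zero.mp hS)
    have hξ0 : ξ = 0 := funext fun j => hξ j (by simp [hS0])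
    subst hξ0
    obtain ⟨j₀, hj₀⟩ := hexact
    simp only [zero_sub, Pi.neg_apply, abs_neg, hS0, sdiff_empty, Nat.cast_zero,
      add_zero] at hBQ₀ hB₀Q hj₀ ⊢
    exact add_sq_le_sum_sdiff_add_card_mul_sq hB₀ hne (by simpa using hs₁) hBQ₀ hB₀Q
      (neg_eq_zero.mp hj₀)
  · have h1 := le_sum_sdiff_add_card_mul_sq hξ hS hB₀ hs₁ hB₀Q
    have h2 : Q₀ ^ 2 ≤ kβ * Q₀ ^ 2 :=
      le_mul_of_one_le_left (sq_nonneg _) (by exact_mod_cast hkβ)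
    linarith

/-- With `#Bq = q m`, `#B₀ = q₀ m`, `kβ = β m`, `Fintype.card ι = m` and `s₁`, `s₂`, `sM`, `D` the
quantities `σ_{q-β,min}² ‖d‖²`, `σ_{q₀-β,min}² ‖d‖²`, `σ_max² ‖d‖²`, `‖d‖²`, the left side is
`(q - q₀) m C ‖d‖²`. -/
theorem le_sum_sq_sub_sum_sq [Fintype ι] (hξ : ∀ j ∉ S, ξ j = 0) (hS : #S ≤ kβ) {Bq B₀ : Finset ι}
    (hB₀ : B₀ ⊆ Bq) (hne : B₀.Nonempty) (hkβ : #B₀ + kβ ≤ #Bq)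
    (hkβm : #Bq + kβ < Fintype.card ι) {Q₀ Q s₁ s₂ sM D : ℝ}
    (hBQ₀ : ∀ i ∈ Bq \ B₀, Q₀ ≤ |(ξ - e) i|) (hB₀Q : ∀ i ∈ B₀, |(ξ - e) i| ≤ Q₀)
    (hBqQ : ∀ i ∈ Bq, |(ξ - e) i| ≤ Q) (hQ : #{j | |(ξ - e) j| < Q} < #Bq)
    (hexact : ∃ j, (ξ - e) j = 0)
    (hs₁ : ∀ T : Finset ι, #Bq - kβ ≤ #T → s₁ ≤ ∑ i ∈ T, e i ^ 2)
    (hs₂ : ∀ T : Finset ι, #B₀ - kβ ≤ #T → s₂ ≤ ∑ i ∈ T, e i ^ 2)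
    (hsM : ∀ T : Finset ι, ∑ i ∈ T, e i ^ 2 ≤ sM) (hD : ∀ i, e i ^ 2 ≤ D) :
    (#Bq - #B₀ - kβ) * s₁ / #Bq + (#Bq - #B₀ - kβ) * s₂ / (#Bq * #B₀) - kβ * D
        - 2 * kβ * sM / (Fintype.card ι - #Bq - kβ) ≤
      ∑ i ∈ Bq \ B₀, e i ^ 2 - ∑ i ∈ Bq \ B₀, ξ i ^ 2 := by
  obtain ⟨i₀, hi₀⟩ := hne
  have hQ₀ : 0 ≤ Q₀ := (abs_nonneg _).trans (hB₀Q i₀ hi₀)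
  have hQ0 : 0 ≤ Q := (abs_nonneg _).trans (hBqQ i₀ (hB₀ hi₀))
  have hD0 : 0 ≤ D := (sq_nonneg _).trans (hD i₀)
  have hB₀pos : (0 : ℝ) < #B₀ := by exact_mod_cast card_pos.mpr ⟨i₀, hi₀⟩
  have ha : (0 : ℝ) ≤ #Bq - #B₀ - kβ := by
    have : ((#B₀ + kβ : ℕ) : ℝ) ≤ #Bq := by exact_mod_cast hkβ
    push_cast at this; linarith
  have hW : (0 : ℝ) < Fintype.card ι - #Bq - kβ := by
    have : ((#Bq + kβ : ℕ) : ℝ) < Fintype.card ι := by exact_mod_cast hkβm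
    push_cast at this; linarith
  have hBcard : (#(Bq \ B₀) : ℝ) = #Bq - #B₀ := by
    rw [card_sdiff_of_subset hB₀, Nat.cast_sub (card_le_card hB₀)]
  have hX : (#Bq - #B₀ - kβ) * Q₀ ^ 2 ≤ ∑ i ∈ (Bq \ B₀) \ S, e i ^ 2 := by
    simpa [hBcard] using card_sub_mul_sq_le_sum_sdiff hξ hS hQ₀ hBQ₀
  have hs₂Q₀ : s₂ ≤ #B₀ * Q₀ ^ 2 :=
    (hs₂ _ (by have := le_card_sdiff S B₀; omega)).trans (sum_sdiff_le_card_mul_sq hξ hB₀Q)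
  have hs₁Q₀ := add_sq_le_sum_sdiff_add_card_add_mul_sq hξ hS hB₀ ⟨i₀, hi₀⟩ hs₁ hBQ₀ hB₀Q hexact
  have hQsM := card_sub_mul_sq_le hξ hS hQ hQ0 hsM
  have hloss := sum_sdiff_sub_le_sum_sq_sub_sum_sq hξ hS (B := Bq \ B₀)
    (fun i hi => hBqQ i (mem_sdiff.mp hi).1) hD hD0
  have hBqpos : (0 : ℝ) < #Bq := by linarith
  set X := ∑ i ∈ (Bq \ B₀) \ S, e i ^ 2
  have hcentral : (#Bq - #B₀ - kβ) * s₁ / #Bq + (#Bq - #B₀ - kβ) * s₂ / (#Bq * #B₀) ≤ X := by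
    rw [div_add_div _ _ hBqpos.ne' (by positivity), div_le_iff₀ (by positivity)]
    nlinarith [mul_le_mul_of_nonneg_left hs₁Q₀ (mul_nonneg ha hB₀pos.le),
      mul_le_mul_of_nonneg_left hs₂Q₀ ha, mul_le_mul_of_nonneg_left hX (by positivity :
        (0 : ℝ) ≤ #B₀ * (#B₀ + kβ))]
  have hnoise : 2 * kβ * Q ^ 2 ≤ 2 * kβ * sM / (Fintype.card ι - #Bq - kβ) := by
    rw [le_div_iff₀ hW]
    nlinarith [mul_le_mul_of_nonneg_left hQsM (by positivity : (0 : ℝ) ≤ 2 * kβ)]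
  linarith

end Corruption

/-- The constant `C` of the contraction estimate. -/
noncomputable def contractionCoeff (m q₀ q β σ₁ σ₂ σM : ℝ) : ℝ :=
  (q - q₀ - β) * (σ₁ ^ 2 / ((q - q₀) * q * m) + σ₂ ^ 2 / ((q - q₀) * q₀ * q * m ^ 2)) -
    (β / (q - q₀)) * (1 + 2 * σM ^ 2 / (m * (1 - q - β)))

section ContractionCoeff

variable {m q₀ q β σ₁ σ₂ σM : ℝ}

theorem mul_contractionCoeff_mul_eq (hm : m ≠ 0) (hq : q ≠ 0) (hq₀ : q₀ ≠ 0) (hqq₀ : q - q₀ ≠ 0)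
    (hq1 : 1 - q - β ≠ 0) (D : ℝ) :
    (q - q₀) * m * contractionCoeff m q₀ q β σ₁ σ₂ σM * D =
      (q * m - q₀ * m - β * m) * (σ₁ ^ 2 * D) / (q * m) +
        (q * m - q₀ * m - β * m) * (σ₂ ^ 2 * D) / (q * m * (q₀ * m)) - β * m * D -
        2 * (β * m) * (σM ^ 2 * D) / (m - q * m - β * m) := by
  have : (m : ℝ) - q * m - β * m ≠ 0 := by
    rw [show (m : ℝ) - q * m - β * m = m * (1 - q - β) by ring]; exact mul_ne_zero hm hq1
  unfold contractionCoeff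
  field_simp
  ring

theorem contractionCoeff_pos (hm : 0 < m) (hσM : 0 < σM) (hq₀ : 0 < q₀) (hβ : 0 ≤ β)
    (hgap : 0 < q - q₀ - β) (hq1 : 0 < 1 - q - β)
    (h : (q / (q - q₀ - β)) * (β * m / σM ^ 2 + 2 * β / (1 - q - β)) <
      (σ₁ ^ 2 + σ₂ ^ 2 / (q₀ * m)) / σM ^ 2) :
    0 < contractionCoeff m q₀ q β σ₁ σ₂ σM := by
  have hq : 0 < q := by linarith
  have hqq₀ : 0 < q - q₀ := by linarith
  have := hqq₀.ne'; have := hgap.ne'; have := hq1.ne'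
  have key : q * (β * m + 2 * β * σM ^ 2 / (1 - q - β)) <
      (q - q₀ - β) * (σ₁ ^ 2 + σ₂ ^ 2 / (q₀ * m)) := by
    rw [lt_div_iff₀ (by positivity)] at h
    have hlhs : q / (q - q₀ - β) * (β * m / σM ^ 2 + 2 * β / (1 - q - β)) * σM ^ 2 =
        q * (β * m + 2 * β * σM ^ 2 / (1 - q - β)) / (q - q₀ - β) := by
      field_simp
    rwa [hlhs, div_lt_iff₀ hgap, mul_comm _ (q - q₀ - β)] at h
  have hid : contractionCoeff m q₀ q β σ₁ σ₂ σM * (q * (q - q₀) * m) =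
      (q - q₀ - β) * (σ₁ ^ 2 + σ₂ ^ 2 / (q₀ * m)) - q * (β * m + 2 * β * σM ^ 2 / (1 - q - β)) := by
    unfold contractionCoeff
    field_simp
  refine (mul_pos_iff_of_pos_right (by positivity : 0 < q * (q - q₀) * m)).mp ?_
  rw [hid]
  linarith

end ContractionCoeff

theorem dqrk_one_step_contraction_general
    {m n : ℕ} (A : Matrix (Fin m) (Fin n) ℝ)
    (q₀ q β : ℝ) (kq₀ kq kβ : ℕ)
    (hm : 0 < m)
    (hrow : ∀ j, ∑ k, (A j k) ^ 2 = 1)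
    (hβq₀ : β < q₀) (hq1 : q < 1 - β) (hgap : q - q₀ > β)
    (hkq₀ : (kq₀ : ℝ) = q₀ * m) (hkq : (kq : ℝ) = q * m) (hkβ : (kβ : ℝ) = β * m)
    (xstar : EuclideanSpace ℝ (Fin n)) (bt b ξ : Fin m → ℝ)
    (hsol : A.mulVec (fun k => xstar k) = bt)
    (hb : b = bt + ξ)
    (hsparse : (Finset.univ.filter fun j => ξ j ≠ 0).card ≤ kβ)
    (xk : EuclideanSpace ℝ (Fin n))
    (hsolve : ∃ j, ∑ k, xk k * A j k = b j)
    (Q₀ Q : ℝ)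
    (hQ : IsQuantile (fun j => |resid A b xk j|) kq Q)
    (B : Finset (Fin m))
    (hBQ : ∀ j ∈ B, Q₀ ≤ |resid A b xk j| ∧ |resid A b xk j| ≤ Q)
    (hBstruct : ∃ Bq B₀ : Finset (Fin m), B₀ ⊆ Bq ∧ Bq.card = kq ∧ B₀.card = kq₀ ∧
      (∀ j ∈ Bq, |resid A b xk j| ≤ Q) ∧ (∀ j ∈ B₀, |resid A b xk j| ≤ Q₀) ∧
      B = Bq \ B₀)
    (C : ℝ)
    (hC : C = (q - q₀ - β) *
        (sigmaSMin A (kq - kβ) ^ 2 / ((q - q₀) * q * m) +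
          sigmaSMin A (kq₀ - kβ) ^ 2 / ((q - q₀) * q₀ * q * m ^ 2)) -
      (β / (q - q₀)) * (1 + 2 * sigmaMax A ^ 2 / (m * (1 - q - β)))) :
    (1 / ((q - q₀) * m)) *
        ∑ i ∈ B, ‖(xk + resid A b xk i • row A i) - xstar‖ ^ 2 ≤
      (1 - C) * ‖xk - xstar‖ ^ 2 ∧
    ((q / (q - q₀ - β)) * (β * m / sigmaMax A ^ 2 + 2 * β / (1 - q - β)) <
        (sigmaSMin A (kq - kβ) ^ 2 + sigmaSMin A (kq₀ - kβ) ^ 2 / (q₀ * m)) /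
          sigmaMax A ^ 2 → 0 < C) := by
  obtain rfl : C = contractionCoeff m q₀ q β (sigmaSMin A (kq - kβ)) (sigmaSMin A (kq₀ - kβ))
    (sigmaMax A) := hC
  obtain ⟨Bq, B₀, hB₀, hBq, hB₀card, hBqQ, hB₀Q, rfl⟩ := hBstruct
  have hm' : (0 : ℝ) < m := by exact_mod_cast hm
  have hβ : 0 ≤ β := nonneg_of_mul_nonneg_left (hkβ ▸ kβ.cast_nonneg) hm'
  have hkβkq₀ : kβ < kq₀ := by exact_mod_cast (show (kβ : ℝ) < kq₀ by rw [hkβ, hkq₀]; nlinarith)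
  have hkqβ : kq₀ + kβ < kq := by
    exact_mod_cast (show (kq₀ + kβ : ℝ) < kq by rw [hkβ, hkq₀, hkq]; nlinarith)
  have hkm : kq + kβ < m := by exact_mod_cast (show (kq + kβ : ℝ) < m by rw [hkβ, hkq]; nlinarith)
  set d := xk - xstar
  have hr : resid A b xk = ξ - fun j => ⟪d, row A j⟫ := resid_eq_sub_inner A hsol hb xk
  have hexact : ∃ j, (ξ - fun j => ⟪d, row A j⟫) j = 0 :=
    hsolve.imp fun j hj => by rw [← hr, resid, hj, sub_self]
  rw [hr] at hQ hBQ hBqQ hB₀Q ⊢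
  have hkey := le_sum_sq_sub_sum_sq (fun j hj => by simpa using hj) hsparse hB₀
    (card_pos.mp (by omega)) (by omega) (by simpa [hBq] using hkm) (fun i hi => (hBQ i hi).1)
    hB₀Q hBqQ (hBq ▸ hQ.2) hexact (fun T hT => sigmaSMin_sq_mul_le_sum A (hBq ▸ hT) d)
    (fun T hT => sigmaSMin_sq_mul_le_sum A (hB₀card ▸ hT) d) (sum_inner_row_sq_le A · d)
    fun i => inner_row_sq_le_norm_sq A (hrow i) d
  rw [hBq, hB₀card, Fintype.card_fin, hkq, hkq₀, hkβ, ← mul_contractionCoeff_mul_eq hm'.ne'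
    (by linarith) (by linarith) (by linarith) (by linarith)] at hkey
  refine ⟨?_, fun h => contractionCoeff_pos hm' (sigmaMax_pos A fun h0 => by
    simpa [h0] using hrow ⟨0, hm⟩) (by linarith) hβ (by linarith) (by linarith) h⟩
  have hstep : ∑ i ∈ Bq \ B₀, ‖xk + (ξ - fun j => ⟪d, row A j⟫) i • row A i - xstar‖ ^ 2 =
      ∑ i ∈ Bq \ B₀, (‖d‖ ^ 2 + ξ i ^ 2 - ⟪d, row A i⟫ ^ 2) :=
    sum_congr rfl fun i _ => norm_add_smul_sub_sq (norm_row A (hrow i)) xk xstar (ξ i)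
  rw [hstep, sum_sub_distrib, sum_add_distrib, sum_const, nsmul_eq_mul, card_sdiff_of_subset hB₀,
    Nat.cast_sub (card_le_card hB₀), hBq, hB₀card, hkq, hkq₀, one_div,
    inv_mul_le_iff₀ (by nlinarith)]
  linarith

theorem dqrk_one_step_contraction
    {m n : ℕ} (A : Matrix (Fin m) (Fin n) ℝ)
    (q₀ q β : ℝ) (kq₀ kq kβ : ℕ)
    (hm : 0 < m) (hmn : n ≤ m) (hrank : A.rank = n)
    (hrow : ∀ j, ∑ k, (A j k) ^ 2 = 1)
    (hβq₀ : β < q₀) (hq₀q : q₀ < q) (hq1 : q < 1 - β) (hgap : q - q₀ > β)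
    (hkq₀ : (kq₀ : ℝ) = q₀ * m) (hkq : (kq : ℝ) = q * m) (hkβ : (kβ : ℝ) = β * m)
    (xstar : EuclideanSpace ℝ (Fin n)) (bt b ξ : Fin m → ℝ)
    (hsol : A.mulVec (fun k => xstar k) = bt)
    (hb : b = bt + ξ)
    (hsparse : (Finset.univ.filter fun j => ξ j ≠ 0).card ≤ kβ)
    (xk : EuclideanSpace ℝ (Fin n))
    (hsolve : ∃ j, ∑ k, xk k * A j k = b j)
    (Q₀ Q : ℝ)
    (hQ₀ : IsQuantile (fun j => |resid A b xk j|) kq₀ Q₀)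
    (hQ : IsQuantile (fun j => |resid A b xk j|) kq Q)
    (B : Finset (Fin m)) (hBcard : B.card = kq - kq₀)
    (hBQ : ∀ j ∈ B, Q₀ ≤ |resid A b xk j| ∧ |resid A b xk j| ≤ Q)
    (hBstruct : ∃ Bq B₀ : Finset (Fin m), B₀ ⊆ Bq ∧ Bq.card = kq ∧ B₀.card = kq₀ ∧
      (∀ j ∈ Bq, |resid A b xk j| ≤ Q) ∧ (∀ j ∈ B₀, |resid A b xk j| ≤ Q₀) ∧
      B = Bq \ B₀)
    (C : ℝ)
    (hC : C = (q - q₀ - β) *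
        (sigmaSMin A (kq - kβ) ^ 2 / ((q - q₀) * q * m) +
          sigmaSMin A (kq₀ - kβ) ^ 2 / ((q - q₀) * q₀ * q * m ^ 2)) -
      (β / (q - q₀)) * (1 + 2 * sigmaMax A ^ 2 / (m * (1 - q - β)))) :
    (1 / ((q - q₀) * m)) *
        ∑ i ∈ B, ‖(xk + resid A b xk i • row A i) - xstar‖ ^ 2 ≤
      (1 - C) * ‖xk - xstar‖ ^ 2 ∧
    ((q / (q - q₀ - β)) * (β * m / sigmaMax A ^ 2 + 2 * β / (1 - q - β)) <
        (sigmaSMin A (kq - kβ) ^ 2 + sigmaSMin A (kq₀ - kβ) ^ 2 / (q₀ * m)) /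
          sigmaMax A ^ 2 → 0 < C) :=
  dqrk_one_step_contraction_general A q₀ q β kq₀ kq kβ hm hrow hβq₀ hq1 hgap hkq₀ hkq hkβ xstar bt b
    ξ hsol hb hsparse xk hsolve Q₀ Q hQ B hBQ hBstruct C hC
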